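/- For all n ≥ 0 and d ≥ 2, the bivariate d-Hoggatt polynomials satisfy the recurrence (x ⊕_d y)^{(n+1)} = (x+y)·(x ⊕_d y)^{(n)} + Σ_{k=1}^{n} (1/⟨n+1-k⟩_d) ⟨n choose k⟩_d (Σ_{i=1}^{d-1} ⟨n+1-k⟩_{d-i} ⟨k⟩_i) x^{n+1-k} y^k. -/

import Mathlib

/-!
Write `H n k = ⟨n choose k⟩_d` and `s m = ⟨m⟩_d`. Comparing coefficients of `x^(n+1-k) y^k`, the
recurrence reduces to the Pascal-type rule
  `H (n+1) k = H n k + H n (k-1) + (s (n+1) - s (n+1-k) - s k) / s (n+1-k) * H n k`,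
which follows from the ratios `H (n+1) k / H n k = s (n+1) / s (n+1-k)` and
`H n (k-1) / H n k = s k / s (n+1-k)`. The inner sum over `i` is identified by Vandermonde's
identity `⟨a+b⟩_d = ∑ᵢ ⟨a⟩_(d-i) ⟨b⟩_i` for multiset coefficients, whose terms `i = 0` and `i = d`
are `⟨a⟩_d` and `⟨b⟩_d`.
-/

open MvPolynomial

/-- The m-th simplicial j-polytopic number ⟨m⟩_j = C(m+j-1, j). -/
def sp (j m : ℕ) : ℕ := Nat.choose (m + j - 1) j

/-- The d-simplitorial ⟨n⟩_d! = ∏_{k=1}^n ⟨k⟩_d, as a rational number. -/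
def spFact (d n : ℕ) : ℚ := ∏ k ∈ Finset.Icc 1 n, (sp d k : ℚ)

/-- The d-Hoggatt binomial coefficient ⟨n choose k⟩_d. -/
def hog (d n k : ℕ) : ℚ := spFact d n / (spFact d k * spFact d (n - k))

/-- The bivariate d-Hoggatt polynomial (x ⊕_d y)^{(n)} in ℚ[x,y]. -/
noncomputable def bivarHoggatt (d n : ℕ) : MvPolynomial (Fin 2) ℚ :=
  ∑ k ∈ Finset.range (n + 1), C (hog d n k) * X 0 ^ (n - k) * X 1 ^ k

open Finset

theorem sp_zero_left (m : ℕ) : sp 0 m = 1 := by simp [sp]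

theorem sp_cast_ne_zero (j : ℕ) {m : ℕ} (hm : m ≠ 0) : (sp j m : ℚ) ≠ 0 :=
  Nat.cast_ne_zero.2 (Nat.choose_pos (by omega)).ne'

/-- Vandermonde's identity for multiset coefficients, obtained from the Chu–Vandermonde identity in
`ℤ` through `⟨m⟩_j = (-1)^j * choose (-m) j`. -/
theorem sp_add (d a b : ℕ) : sp d (a + b) = ∑ ij ∈ antidiagonal d, sp ij.1 a * sp ij.2 b := by
  have h := Ring.add_choose_eq (r := -(a : ℤ)) (s := -(b : ℤ)) d (Commute.all _ _)
  rw [← neg_add, Ring.choose_neg'] at h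
  have hsign : ∀ ij ∈ antidiagonal d,
      Ring.choose (-(a : ℤ)) ij.1 * Ring.choose (-(b : ℤ)) ij.2
        = Int.negOnePow d • ((sp ij.1 a : ℤ) * sp ij.2 b) := by
    rintro ⟨i, j⟩ hij
    rw [HasAntidiagonal.mem_antidiagonal] at hij
    rw [Ring.choose_neg', Ring.choose_neg', smul_mul_smul_comm, ← Int.negOnePow_add,
      ← Nat.cast_add, hij]
    rfl
  rw [sum_congr rfl hsign, ← smul_sum] at h
  exact_mod_cast (MulAction.injective (Int.negOnePow d) h : (sp d (a + b) : ℤ) = _)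

theorem sp_add_eq_add_add_sum {d : ℕ} (hd : d ≠ 0) (a b : ℕ) :
    sp d (a + b) = sp d a + sp d b + ∑ i ∈ Icc 1 (d - 1), sp (d - i) a * sp i b := by
  obtain ⟨e, rfl⟩ := Nat.exists_eq_add_one_of_ne_zero hd
  rw [sp_add, ← Nat.sum_antidiagonal_swap]
  simp only [Prod.fst_swap, Prod.snd_swap]
  rw [Nat.sum_antidiagonal_eq_sum_range_succ (fun i j => sp j a * sp i b), sum_range_succ,
    sum_range_eq_add_Ico _ e.add_one_pos, Ico_add_one_right_eq_Icc]
  simp only [Nat.sub_zero, Nat.sub_self, sp_zero_left, mul_one, one_mul, Nat.add_sub_cancel]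
  ring

theorem spFact_succ (d n : ℕ) : spFact d (n + 1) = spFact d n * sp d (n + 1) :=
  prod_Icc_succ_top (Nat.le_add_left 1 n) _

theorem spFact_ne_zero (d n : ℕ) : spFact d n ≠ 0 :=
  prod_ne_zero_iff.2 fun k hk => sp_cast_ne_zero d (by grind)

theorem spFact_zero (d : ℕ) : spFact d 0 = 1 := rfl

theorem hog_zero_right (d n : ℕ) : hog d n 0 = 1 := by
  rw [hog, spFact_zero, one_mul, Nat.sub_zero, div_self (spFact_ne_zero d n)]

theorem hog_self (d n : ℕ) : hog d n n = 1 := by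
  rw [hog, Nat.sub_self, spFact_zero, mul_one, div_self (spFact_ne_zero d n)]

theorem hog_succ_mul {k n : ℕ} (d : ℕ) (hkn : k ≤ n) :
    hog d (n + 1) k * sp d (n + 1 - k) = hog d n k * sp d (n + 1) := by
  have := sp_cast_ne_zero d (n - k).succ_ne_zero
  rw [hog, hog, Nat.sub_add_comm hkn, spFact_succ, spFact_succ]
  have := spFact_ne_zero d k
  have := spFact_ne_zero d (n - k)
  field_simp

theorem hog_pred_mul {k n : ℕ} (d : ℕ) (hk : k ≠ 0) (hkn : k ≤ n) :
    hog d n (k - 1) * sp d (n + 1 - k) = hog d n k * sp d k := by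
  obtain ⟨j, rfl⟩ := Nat.exists_eq_add_one_of_ne_zero hk
  have := sp_cast_ne_zero d j.succ_ne_zero
  have := sp_cast_ne_zero d (n - (j + 1)).succ_ne_zero
  rw [hog, hog, Nat.add_sub_cancel, show n - j = n - (j + 1) + 1 by omega,
    show n + 1 - (j + 1) = n - (j + 1) + 1 by omega, spFact_succ, spFact_succ]
  have := spFact_ne_zero d j
  have := spFact_ne_zero d (n - (j + 1))
  have := spFact_ne_zero d n
  field_simp

theorem hog_succ {d k n : ℕ} (hd : d ≠ 0) (hk : k ≠ 0) (hkn : k ≤ n) :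
    hog d (n + 1) k = hog d n k + hog d n (k - 1) + (1 / (sp d (n + 1 - k) : ℚ)) * hog d n k *
      ∑ i ∈ Icc 1 (d - 1), (sp (d - i) (n + 1 - k) : ℚ) * (sp i k : ℚ) := by
  have := sp_cast_ne_zero d (by omega : n + 1 - k ≠ 0)
  have hsplit : (sp d (n + 1) : ℚ) = sp d (n + 1 - k) + sp d k +
      ∑ i ∈ Icc 1 (d - 1), (sp (d - i) (n + 1 - k) : ℚ) * (sp i k : ℚ) := by
    have h := sp_add_eq_add_add_sum hd (n + 1 - k) k
    rw [Nat.sub_add_cancel (by omega : k ≤ n + 1)] at h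
    exact_mod_cast h
  have hsucc := hog_succ_mul d hkn
  have hpred := hog_pred_mul d hk hkn
  field_simp
  linear_combination hsucc - hpred + hog d n k * hsplit

theorem sum_range_add_two_eq {M : Type*} [AddCommMonoid M] (f : ℕ → M) (n : ℕ) :
    ∑ k ∈ range (n + 2), f k = f 0 + ∑ k ∈ Icc 1 n, f k + f (n + 1) := by
  rw [sum_range_succ, sum_range_eq_add_Ico _ n.add_one_pos, Ico_add_one_right_eq_Icc]

theorem add_mul_sum_range {R : Type*} [CommSemiring R] (x y : R) (a : ℕ → R) (n : ℕ) :
    (x + y) * ∑ k ∈ range (n + 1), a k * x ^ (n - k) * y ^ k =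
      a 0 * x ^ (n + 1) + ∑ k ∈ Icc 1 n, (a k + a (k - 1)) * x ^ (n + 1 - k) * y ^ k +
        a n * y ^ (n + 1) := by
  have hx : x * ∑ k ∈ range (n + 1), a k * x ^ (n - k) * y ^ k =
      a 0 * x ^ (n + 1) + ∑ k ∈ Icc 1 n, a k * x ^ (n + 1 - k) * y ^ k := by
    rw [mul_sum, sum_range_eq_add_Ico _ n.add_one_pos, Ico_add_one_right_eq_Icc]
    refine congrArg₂ _ (by rw [Nat.sub_zero]; ring) (sum_congr rfl fun k hk => ?_)
    rw [Nat.sub_add_comm (mem_Icc.1 hk).2, pow_succ]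
    ring
  have hy : y * ∑ k ∈ range (n + 1), a k * x ^ (n - k) * y ^ k =
      ∑ k ∈ Icc 1 n, a (k - 1) * x ^ (n + 1 - k) * y ^ k + a n * y ^ (n + 1) := by
    rw [mul_sum, sum_range_succ, Nat.sub_self, ← Ico_add_one_right_eq_Icc, sum_Ico_eq_sum_range,
      Nat.add_sub_cancel]
    refine congrArg₂ _ (sum_congr rfl fun k _ => ?_) (by ring)
    rw [show n + 1 - (1 + k) = n - k by omega, Nat.add_sub_cancel_left, pow_add]
    ring
  rw [add_mul, hx, hy]
  simp only [add_mul, sum_add_distrib]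
  ring

theorem bivarHoggatt_recurrence (d n : ℕ) (hd : 2 ≤ d) :
    bivarHoggatt d (n + 1) =
      (X 0 + X 1) * bivarHoggatt d n +
        ∑ k ∈ Finset.Icc 1 n,
          C ((1 / (sp d (n + 1 - k) : ℚ)) * hog d n k *
              ∑ i ∈ Finset.Icc 1 (d - 1), (sp (d - i) (n + 1 - k) : ℚ) * (sp i k : ℚ)) *
            X 0 ^ (n + 1 - k) * X 1 ^ k := by
  have hmiddle : ∑ k ∈ Icc 1 n, C (hog d (n + 1) k) * X 0 ^ (n + 1 - k) * X 1 ^ k =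
      (∑ k ∈ Icc 1 n, (C (hog d n k) + C (hog d n (k - 1))) * X 0 ^ (n + 1 - k) * X 1 ^ k +
        ∑ k ∈ Icc 1 n,
          C ((1 / (sp d (n + 1 - k) : ℚ)) * hog d n k *
              ∑ i ∈ Icc 1 (d - 1), (sp (d - i) (n + 1 - k) : ℚ) * (sp i k : ℚ)) *
            X 0 ^ (n + 1 - k) * X 1 ^ k : MvPolynomial (Fin 2) ℚ) := by
    rw [← sum_add_distrib]
    refine sum_congr rfl fun k hk => ?_
    rw [mem_Icc] at hk
    rw [hog_succ (by omega) (by omega) hk.2, map_add, map_add]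
    ring
  rw [bivarHoggatt, bivarHoggatt, sum_range_add_two_eq, add_mul_sum_range, hmiddle]
  simp only [hog_zero_right, hog_self, Nat.sub_zero, Nat.sub_self, map_one, pow_zero]
  ring
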